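/- Let f : ℝⁿ → ℝ be differentiable with L-Lipschitz gradient, bounded below, and let (wₜ) be gradient descent iterates with step size 0 < η ≤ 1/L. Then the sequence of step lengths tends to zero: ‖w_{t+1} - wₜ‖ → 0 as t → ∞. -/

import Mathlib

/-!
A gradient step of size `η ≤ 1/L` decreases `f` by at least `η/2 ‖∇f(wₜ)‖²`; this is the descent
lemma `f (x + v) ≤ f x + ⟪∇f x, v⟫ + L/2 ‖v‖²` applied to `v = -η ∇f(wₜ)`. Since `f` is bounded
below, the decreasing sequence `f(wₜ)` converges, so the decreases, and with them the squared step
lengths `‖w_{t+1} - wₜ‖² = η² ‖∇f(wₜ)‖²`, tend to zero.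
-/

open Filter Set
open scoped NNReal Topology RealInnerProductSpace Gradient

variable {E : Type*} [NormedAddCommGroup E] [InnerProductSpace ℝ E]

theorem LipschitzWith.inner_sub_apply_add_smul_le {g : E → E} {K : ℝ≥0} (hg : LipschitzWith K g)
    (x v : E) {s : ℝ} (hs : 0 ≤ s) : ⟪g (x + s • v) - g x, v⟫ ≤ K * s * ‖v‖ ^ 2 :=
  calc ⟪g (x + s • v) - g x, v⟫
      ≤ ‖g (x + s • v) - g x‖ * ‖v‖ := real_inner_le_norm _ _
    _ ≤ K * ‖s • v‖ * ‖v‖ := by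
        gcongr
        simpa [dist_eq_norm] using hg.dist_le_mul (x + s • v) x
    _ = K * s * ‖v‖ ^ 2 := by rw [norm_smul, Real.norm_of_nonneg hs]; ring

variable [CompleteSpace E] {f : E → ℝ}

theorem HasGradientAt.hasDerivAt_comp_add_smul {g x v : E} {t : ℝ}
    (h : HasGradientAt f g (x + t • v)) :
    HasDerivAt (fun s : ℝ => f (x + s • v)) ⟪g, v⟫ t := by
  have hline : HasDerivAt (fun s : ℝ => x + s • v) v t := by
    simpa using ((hasDerivAt_id t).smul_const v).const_add x
  simpa [Function.comp_def] using h.hasFDerivAt.comp_hasDerivAt t hline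

theorem le_add_inner_gradient_add_sq_of_lipschitzWith (hf : Differentiable ℝ f) {K : ℝ≥0}
    (hK : LipschitzWith K (∇ f)) (x v : E) :
    f (x + v) ≤ f x + ⟪∇ f x, v⟫ + K / 2 * ‖v‖ ^ 2 := by
  set φ : ℝ → ℝ := fun s => f (x + s • v) - s * ⟪∇ f x, v⟫ - K / 2 * ‖v‖ ^ 2 * s ^ 2
  set φ' : ℝ → ℝ := fun s => ⟪∇ f (x + s • v), v⟫ - ⟪∇ f x, v⟫ - K * ‖v‖ ^ 2 * s
  have hφ : ∀ s, HasDerivAt φ (φ' s) s := fun s =>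
    ((((hf (x + s • v)).hasGradientAt.hasDerivAt_comp_add_smul).sub
      ((hasDerivAt_id s).mul_const ⟪∇ f x, v⟫)).sub
      ((hasDerivAt_pow 2 s).const_mul (K / 2 * ‖v‖ ^ 2))).congr_deriv (by simp only [φ']; ring)
  have hφ'_nonpos : ∀ s ∈ interior (Icc (0 : ℝ) 1), φ' s ≤ 0 := fun s hs => by
    rw [interior_Icc] at hs
    have := hK.inner_sub_apply_add_smul_le x v hs.1.le
    rw [inner_sub_left] at this
    simp only [φ']
    linarith
  have hanti : AntitoneOn φ (Icc 0 1) :=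
    antitoneOn_of_hasDerivWithinAt_nonpos (convex_Icc 0 1)
      (fun s _ => (hφ s).continuousAt.continuousWithinAt)
      (fun s _ => (hφ s).hasDerivWithinAt) hφ'_nonpos
  have := hanti (left_mem_Icc.2 zero_le_one) (right_mem_Icc.2 zero_le_one) zero_le_one
  simp only [φ, zero_smul, one_smul, add_zero, zero_mul, sub_zero, one_mul, one_pow, mul_one,
    ne_eq, OfNat.ofNat_ne_zero, not_false_eq_true, zero_pow] at this
  linarith

theorem apply_sub_smul_gradient_le (hf : Differentiable ℝ f) {K : ℝ≥0}
    (hK : LipschitzWith K (∇ f)) {η : ℝ} (hη : 0 ≤ η) (hηK : K * η ≤ 1) (x : E) :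
    f (x - η • ∇ f x) ≤ f x - η / 2 * ‖∇ f x‖ ^ 2 := by
  have h := le_add_inner_gradient_add_sq_of_lipschitzWith hf hK x (-(η • ∇ f x))
  rw [← sub_eq_add_neg, inner_neg_right, real_inner_smul_right, real_inner_self_eq_norm_sq,
    norm_neg, norm_smul, Real.norm_of_nonneg hη] at h
  nlinarith [mul_nonneg hη (sq_nonneg ‖∇ f x‖)]

theorem tendsto_zero_of_add_le_of_bddBelow {a b : ℕ → ℝ} (hb : ∀ t, 0 ≤ b t)
    (hab : ∀ t, a (t + 1) + b t ≤ a t) (ha : BddBelow (range a)) :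
    Tendsto b atTop (𝓝 0) := by
  have hlim : Tendsto a atTop (𝓝 (⨅ t, a t)) :=
    tendsto_atTop_ciInf (antitone_nat_of_succ_le fun t => by linarith [hb t, hab t]) ha
  have hdiff : Tendsto (fun t => a t - a (t + 1)) atTop (𝓝 0) := by
    simpa using hlim.sub (hlim.comp (tendsto_add_atTop_nat 1))
  exact squeeze_zero hb (fun t => by linarith [hab t]) hdiff

theorem step_lengths_tendsto_zero_general {n : ℕ} (f : EuclideanSpace ℝ (Fin n) → ℝ)
    (hf : Differentiable ℝ f) (L : ℝ)
    (hlip : LipschitzWith (Real.toNNReal L) (gradient f))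
    (fstar : ℝ) (hbound : ∀ x, f x ≥ fstar)
    (η : ℝ) (hη : 0 < η) (hηL : η ≤ 1 / L)
    (w : ℕ → EuclideanSpace ℝ (Fin n))
    (hrec : ∀ t, w (t + 1) = w t - η • gradient f (w t)) :
    Tendsto (fun t => ‖w (t + 1) - w t‖) atTop (nhds 0) := by
  have hL : 0 < L := one_div_pos.mp (hη.trans_le hηL)
  have hLη : (L.toNNReal : ℝ) * η ≤ 1 := by
    rw [Real.coe_toNNReal _ hL.le]
    exact (le_div_iff₀' hL).mp (by simpa using hηL)
  have hdecrease : ∀ t, f (w (t + 1)) + η / 2 * ‖∇ f (w t)‖ ^ 2 ≤ f (w t) := fun t => by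
    rw [hrec]
    linarith [apply_sub_smul_gradient_le hf hlip hη.le hLη (w t)]
  have hgrad : Tendsto (fun t => η / 2 * ‖∇ f (w t)‖ ^ 2) atTop (𝓝 0) :=
    tendsto_zero_of_add_le_of_bddBelow (fun t => by positivity) hdecrease
      ⟨fstar, by rintro _ ⟨t, rfl⟩; exact hbound (w t)⟩
  have hstep : ∀ t, ‖w (t + 1) - w t‖ = √(2 * η * (η / 2 * ‖∇ f (w t)‖ ^ 2)) := fun t => by
    rw [hrec, sub_sub_cancel_left, norm_neg, norm_smul, Real.norm_of_nonneg hη.le,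
      show 2 * η * (η / 2 * ‖∇ f (w t)‖ ^ 2) = (η * ‖∇ f (w t)‖) ^ 2 by ring,
      Real.sqrt_sq (by positivity)]
  simpa [hstep] using (hgrad.const_mul (2 * η)).sqrt

theorem step_lengths_tendsto_zero {n : ℕ} (f : EuclideanSpace ℝ (Fin n) → ℝ)
    (hf : Differentiable ℝ f) (L : ℝ) (hL : 0 < L)
    (hlip : LipschitzWith (Real.toNNReal L) (gradient f))
    (fstar : ℝ) (hbound : ∀ x, f x ≥ fstar)
    (η : ℝ) (hη : 0 < η) (hηL : η ≤ 1 / L)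
    (w : ℕ → EuclideanSpace ℝ (Fin n))
    (hrec : ∀ t, w (t + 1) = w t - η • gradient f (w t)) :
    Tendsto (fun t => ‖w (t + 1) - w t‖) atTop (nhds 0) :=
  step_lengths_tendsto_zero_general f hf L hlip fstar hbound η hη hηL w hrec
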